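/- Let q ≥ 1, n ≥ 1, let G be a real q×n matrix, let X ⊆ ℝⁿ be a nonempty compact convex set, and define Γ(x) = (Gx, −eᵀGx), Y := {Gx : x ∈ X}, P := Γ[X] + ℝ₊^{q+1}, and H := {y ∈ ℝ^{q+1} : eᵀy = 0}. Let ε > 0 and let P_inner ⊆ ℝ^{q+1} satisfy P + {εe} ⊆ P_inner, P_inner ⊆ P, and P_inner = (P_inner ∩ H) + ℝ₊^{q+1}, and set Y_inner := π[P_inner ∩ H]. Then Y_inner ⊆ Y and d_H(Y_inner, Y) ≤ ε√(q² + q − 1). -/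

import Mathlib

noncomputable section
open Pointwise

def euc {m : ℕ} (x : Fin m → ℝ) : EuclideanSpace ℝ (Fin m) := WithLp.toLp 2 x

def Gam {q n : ℕ} (G : Matrix (Fin q) (Fin n) ℝ) (x : Fin n → ℝ) :
    EuclideanSpace ℝ (Fin (q + 1)) :=
  euc (Fin.snoc (G.mulVec x) (-(∑ j, G.mulVec x j)))

def orth (m : ℕ) : Set (EuclideanSpace ℝ (Fin m)) := {y | ∀ i, 0 ≤ y i}

def hyp (q : ℕ) : Set (EuclideanSpace ℝ (Fin (q + 1))) := {y | ∑ i, y i = 0}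

def proj {q : ℕ} (y : EuclideanSpace ℝ (Fin (q + 1))) : EuclideanSpace ℝ (Fin q) :=
  euc (fun i => y i.castSucc)

def phi {q : ℕ} (y ys : EuclideanSpace ℝ (Fin (q + 1))) : ℝ :=
  (∑ i : Fin q, y i.castSucc * ys i.castSucc) +
    y (Fin.last q) * (1 - ∑ i : Fin q, ys i.castSucc) - ys (Fin.last q)

/-
A point of `P ∩ H` has the form `Γ(x) + c` with `c ≥ 0`; since `Γ(x) ∈ H`, the coordinates of `c`
sum to zero, so `c = 0`, which gives the inclusion. For the distance bound, `Γ(x) + εe ∈ P_inner`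
equals `p + c` with `p ∈ P_inner ∩ H` and `c ≥ 0`, so `∑ c = (q + 1)ε` and `Gx - π(p)` has
coordinates `c_i - ε` for `i < q`. With `s = ∑_{i<q} c_i ∈ [0, (q + 1)ε]` and `∑ c_i² ≤ s²`,
`∑ (c_i - ε)² ≤ s² - 2εs + qε²`, a convex function of `s` whose maximum `ε²(q² + q - 1)` is
attained at `s = (q + 1)ε` because `q ≥ 1`.
-/

lemma sum_sq_sub_le_of_sum_le {ι : Type*} [Fintype ι] [Nonempty ι] {a : ι → ℝ} {ε : ℝ}
    (ha : ∀ i, 0 ≤ a i) (hsum : ∑ i, a i ≤ ((Fintype.card ι : ℝ) + 1) * ε) :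
    ∑ i, (a i - ε) ^ 2 ≤ ε ^ 2 * ((Fintype.card ι : ℝ) ^ 2 + Fintype.card ι - 1) := by
  set m : ℝ := (Fintype.card ι : ℝ)
  set s := ∑ i, a i
  have hm : 1 ≤ m := Nat.one_le_cast.mpr Fintype.card_pos
  have hs : 0 ≤ s := Finset.sum_nonneg fun i _ => ha i
  have hsq : ∑ i, a i ^ 2 ≤ s ^ 2 := Finset.sum_sq_le_sq_sum_of_nonneg fun i _ => ha i
  have hexpand : ∑ i, (a i - ε) ^ 2 = ∑ i, a i ^ 2 - 2 * ε * s + m * ε ^ 2 := by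
    simp only [sub_sq, Finset.sum_add_distrib, Finset.sum_sub_distrib, ← Finset.sum_mul,
      ← Finset.mul_sum, Finset.sum_const, Finset.card_univ, nsmul_eq_mul, s, m]
    ring
  have hendpoints : 0 ≤ ((m + 1) * ε - s) * (s + (m - 1) * ε) :=
    mul_nonneg (by linarith) (by nlinarith)
  rw [hexpand]
  nlinarith

lemma Gam_mem_hyp {q n : ℕ} (G : Matrix (Fin q) (Fin n) ℝ) (x : Fin n → ℝ) :
    Gam G x ∈ hyp q := by
  simp [hyp, Gam, euc, Fin.sum_univ_castSucc]

lemma proj_Gam {q n : ℕ} (G : Matrix (Fin q) (Fin n) ℝ) (x : Fin n → ℝ) :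
    proj (Gam G x) = euc (G.mulVec x) := by
  ext i
  simp [proj, Gam, euc]

lemma zero_mem_orth (m : ℕ) : (0 : EuclideanSpace ℝ (Fin m)) ∈ orth m :=
  fun _ => le_rfl

lemma eq_zero_of_mem_orth_of_mem_hyp {q : ℕ} {c : EuclideanSpace ℝ (Fin (q + 1))}
    (hc : c ∈ orth (q + 1)) (hcH : c ∈ hyp q) : c = 0 := by
  ext i
  exact (Finset.sum_eq_zero_iff_of_nonneg fun i _ => hc i).mp hcH i (Finset.mem_univ i)

lemma image_Gam_add_orth_inter_hyp_subset {q n : ℕ} (G : Matrix (Fin q) (Fin n) ℝ)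
    (X : Set (Fin n → ℝ)) : (Gam G '' X + orth (q + 1)) ∩ hyp q ⊆ Gam G '' X := by
  rintro _ ⟨⟨_, ⟨x, hx, rfl⟩, c, hc, rfl⟩, hyH⟩
  have hGx : ∑ i, Gam G x i = 0 := Gam_mem_hyp G x
  have hcH : c ∈ hyp q := by
    simpa [hyp, Finset.sum_add_distrib, hGx] using hyH
  simpa [eq_zero_of_mem_orth_of_mem_hyp hc hcH] using Set.mem_image_of_mem _ hx

lemma dist_proj_le_of_add_eq {q : ℕ} (hq : 1 ≤ q) {ε : ℝ} (hε : 0 ≤ ε)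
    {u p c : EuclideanSpace ℝ (Fin (q + 1))} (hu : u ∈ hyp q) (hp : p ∈ hyp q)
    (hc : c ∈ orth (q + 1)) (hupc : u + euc (fun _ => ε) = p + c) :
    dist (proj u) (proj p) ≤ ε * Real.sqrt ((q : ℝ) ^ 2 + q - 1) := by
  have : Nonempty (Fin q) := Fin.pos_iff_nonempty.mp hq
  have hcoord : ∀ i : Fin q, proj u i - proj p i = c i.castSucc - ε := fun i => by
    have := congrArg (fun v : EuclideanSpace ℝ (Fin (q + 1)) => v i.castSucc) hupc
    simp only [PiLp.add_apply, euc] at this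
    simp only [proj, euc]
    linarith
  have hsum_c : ∑ i, c i = (q + 1) * ε := by
    have := congrArg (fun v : EuclideanSpace ℝ (Fin (q + 1)) => ∑ i, v i) hupc
    simp only [PiLp.add_apply, Finset.sum_add_distrib, euc, Finset.sum_const,
      Finset.card_univ, Fintype.card_fin, nsmul_eq_mul] at this
    push_cast at this
    linarith [show ∑ i, u i = 0 from hu, show ∑ i, p i = 0 from hp]
  have hsum_le : ∑ i : Fin q, c i.castSucc ≤ ((Fintype.card (Fin q) : ℝ) + 1) * ε := by
    rw [Fintype.card_fin, ← hsum_c, Fin.sum_univ_castSucc]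
    linarith [hc (Fin.last q)]
  have hkey := sum_sq_sub_le_of_sum_le (fun i : Fin q => hc i.castSucc) hsum_le
  rw [Fintype.card_fin] at hkey
  calc dist (proj u) (proj p)
      = Real.sqrt (∑ i : Fin q, (c i.castSucc - ε) ^ 2) := by
        simp only [EuclideanSpace.dist_eq, Real.dist_eq, sq_abs, hcoord]
    _ ≤ Real.sqrt (ε ^ 2 * ((q : ℝ) ^ 2 + q - 1)) := Real.sqrt_le_sqrt hkey
    _ = ε * Real.sqrt ((q : ℝ) ^ 2 + q - 1) := by
        rw [Real.sqrt_mul (sq_nonneg ε), Real.sqrt_sq hε]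

theorem stmt_14_general (q n : ℕ) (hq : 1 ≤ q)
    (G : Matrix (Fin q) (Fin n) ℝ) (X : Set (Fin n → ℝ))
    (ε : ℝ) (hε : 0 < ε)
    (Pinner : Set (EuclideanSpace ℝ (Fin (q + 1))))
    (h1 : ((Gam G '' X) + orth (q + 1)) + {euc fun _ => ε} ⊆ Pinner)
    (h2 : Pinner ⊆ (Gam G '' X) + orth (q + 1))
    (h3 : Pinner = (Pinner ∩ hyp q) + orth (q + 1)) :
    proj '' (Pinner ∩ hyp q) ⊆ (fun x => euc (G.mulVec x)) '' X ∧
    Metric.hausdorffDist (proj '' (Pinner ∩ hyp q)) ((fun x => euc (G.mulVec x)) '' X)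
      ≤ ε * Real.sqrt ((q : ℝ) ^ 2 + q - 1) := by
  have hY : (fun x => euc (G.mulVec x)) '' X = proj '' (Gam G '' X) := by
    simp only [Set.image_image, proj_Gam]
  have hsub : proj '' (Pinner ∩ hyp q) ⊆ (fun x => euc (G.mulVec x)) '' X :=
    hY ▸ Set.image_mono ((Set.inter_subset_inter_left _ h2).trans
      (image_Gam_add_orth_inter_hyp_subset G X))
  refine ⟨hsub, Metric.hausdorffDist_le_of_infDist (by positivity) (fun y hy => ?_) ?_⟩
  · rw [Metric.infDist_zero_of_mem (hsub hy)]
    positivity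
  rw [hY]
  rintro _ ⟨_, ⟨x, hx, rfl⟩, rfl⟩
  have hGx : Gam G x ∈ Gam G '' X + orth (q + 1) := by
    simpa using Set.add_mem_add (Set.mem_image_of_mem (Gam G) hx) (zero_mem_orth (q + 1))
  have hshift : Gam G x + euc (fun _ => ε) ∈ (Pinner ∩ hyp q) + orth (q + 1) :=
    h3 ▸ h1 (Set.add_mem_add hGx rfl)
  obtain ⟨p, hp, c, hc, hpc⟩ := hshift
  exact (Metric.infDist_le_dist_of_mem (Set.mem_image_of_mem proj hp)).trans
    (dist_proj_le_of_add_eq hq hε.le (Gam_mem_hyp G x) hp.2 hc hpc.symm)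

/-- error bound for (CPP) via the dual Benson algorithm. -/
theorem stmt_14 (q n : ℕ) (hq : 1 ≤ q) (hn : 1 ≤ n)
    (G : Matrix (Fin q) (Fin n) ℝ) (X : Set (Fin n → ℝ))
    (hX : X.Nonempty) (hXc : IsCompact X) (hXconv : Convex ℝ X)
    (ε : ℝ) (hε : 0 < ε)
    (Pinner : Set (EuclideanSpace ℝ (Fin (q + 1))))
    (h1 : ((Gam G '' X) + orth (q + 1)) + {euc fun _ => ε} ⊆ Pinner)
    (h2 : Pinner ⊆ (Gam G '' X) + orth (q + 1))
    (h3 : Pinner = (Pinner ∩ hyp q) + orth (q + 1)) :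
    proj '' (Pinner ∩ hyp q) ⊆ (fun x => euc (G.mulVec x)) '' X ∧
    Metric.hausdorffDist (proj '' (Pinner ∩ hyp q)) ((fun x => euc (G.mulVec x)) '' X)
      ≤ ε * Real.sqrt ((q : ℝ) ^ 2 + q - 1) :=
  stmt_14_general q n hq G X ε hε Pinner h1 h2 h3
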